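/- Let θ_1 > θ_2 > … > θ_I > 0, N_1, …, N_I > 0, S > 0, and for k ∈ {1,…,I} define λ(k) = (∑_{i=1}^k N_i·√θ_i / (S + ∑_{i=1}^k N_i))². If k is such that θ_k > λ(k) and (k = I or θ_{k+1} ≤ λ(k)), then ∑_{i=1}^I N_i·(√(θ_i/λ(k)) − 1)^+ = S; consequently λ(k) is the unique CP water level λ* and #{i : θ_i > λ*} = k. -/

import Mathlib

/-!
On the groups that are active at level λ the water-filling equation
`∑ N_i (√θ_i / √λ - 1) = S` is linear in `1 / √λ`, and its solution is
`√λ = ∑ N_i √θ_i / (S + ∑ N_i)`, i.e. `λ = λ(k)` for the active set `{1, …, k}`.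
The conditions on `k` say exactly that the groups `i ≤ k` are active at `λ(k)` and the others
are not, so `λ(k)` solves the full equation. Each summand is antitone in `λ`, and the first one
is strictly decreasing as long as `λ < θ_1`; hence no other level solves it.
-/

open Finset Real

noncomputable def cpAllocation (θ lam : ℝ) : ℝ := max (√(θ / lam) - 1) 0

noncomputable def cpLevel {ι : Type*} (s : Finset ι) (θ N : ι → ℝ) (S : ℝ) : ℝ :=
  ((∑ i ∈ s, N i * √(θ i)) / (S + ∑ i ∈ s, N i)) ^ 2

section Allocation

variable {θ lam a b : ℝ}

lemma cpAllocation_eq_zero_of_le (hlam : 0 < lam) (h : θ ≤ lam) : cpAllocation θ lam = 0 := by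
  have : √(θ / lam) ≤ 1 := sqrt_le_one.mpr ((div_le_one hlam).mpr h)
  exact max_eq_right (by linarith)

lemma cpAllocation_eq_of_le (hlam : 0 < lam) (h : lam ≤ θ) :
    cpAllocation θ lam = √θ / √lam - 1 := by
  have : 1 ≤ √(θ / lam) := one_le_sqrt.mpr ((one_le_div hlam).mpr h)
  rw [cpAllocation, max_eq_left (by linarith), sqrt_div' θ hlam.le]

lemma cpAllocation_antitoneOn : AntitoneOn (cpAllocation θ) (Set.Ioi 0) := by
  intro a (ha : 0 < a) b (hb : 0 < b) hab
  rcases le_or_gt θ a with hθ | hθ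
  · rw [cpAllocation_eq_zero_of_le ha hθ, cpAllocation_eq_zero_of_le hb (hθ.trans hab)]
  · have : θ / b ≤ θ / a := div_le_div_of_nonneg_left (ha.trans hθ).le ha hab
    exact max_le_max (by linarith [sqrt_le_sqrt this]) le_rfl

lemma cpAllocation_lt_of_lt (ha : 0 < a) (hab : a < b) (hθ : a < θ) :
    cpAllocation θ b < cpAllocation θ a := by
  have hθ_pos : 0 < θ := ha.trans hθ
  have hactive : 1 < √(θ / a) := (lt_sqrt zero_le_one).mpr (by simpa [one_lt_div ha] using hθ)
  have hdecr : √(θ / b) < √(θ / a) :=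
    sqrt_lt_sqrt (div_nonneg hθ_pos.le (ha.trans hab).le) (div_lt_div_of_pos_left hθ_pos ha hab)
  exact (max_lt (by linarith) (by linarith)).trans_le (le_max_left _ _)

end Allocation

section Demand

variable {ι : Type*} {s : Finset ι} {θ N : ι → ℝ} {a b : ℝ}

lemma sum_cpAllocation_lt_of_lt (hN : ∀ i ∈ s, 0 ≤ N i) {j : ι} (hj : j ∈ s) (hNj : 0 < N j)
    (ha : 0 < a) (hab : a < b) (hθj : a < θ j) :
    ∑ i ∈ s, N i * cpAllocation (θ i) b < ∑ i ∈ s, N i * cpAllocation (θ i) a :=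
  sum_lt_sum
    (fun i hi ↦ mul_le_mul_of_nonneg_left
      (cpAllocation_antitoneOn ha (ha.trans hab) hab.le) (hN i hi))
    ⟨j, hj, mul_lt_mul_of_pos_left (cpAllocation_lt_of_lt ha hab hθj) hNj⟩

lemma eq_of_sum_cpAllocation_eq (hN : ∀ i ∈ s, 0 ≤ N i) {j : ι} (hj : j ∈ s) (hNj : 0 < N j)
    (ha : 0 < a) (hb : 0 < b) (hθj : a < θ j)
    (heq : ∑ i ∈ s, N i * cpAllocation (θ i) b = ∑ i ∈ s, N i * cpAllocation (θ i) a) :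
    b = a := by
  rcases lt_trichotomy b a with hba | hba | hab
  · exact absurd heq (sum_cpAllocation_lt_of_lt hN hj hNj hb hba (hba.trans hθj)).ne'
  · exact hba
  · exact absurd heq (sum_cpAllocation_lt_of_lt hN hj hNj ha hab hθj).ne

end Demand

section Level

variable {ι : Type*} {s : Finset ι} {θ N : ι → ℝ} {S : ℝ}

lemma cpLevel_pos (hs : s.Nonempty) (hN : ∀ i ∈ s, 0 < N i) (hS : 0 ≤ S)
    (hactive : ∀ i ∈ s, cpLevel s θ N S < θ i) : 0 < cpLevel s θ N S := by
  obtain ⟨j, hj⟩ := hs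
  have hθj : 0 < θ j := (sq_nonneg _).trans_lt (hactive j hj)
  have hA : 0 < ∑ i ∈ s, N i * √(θ i) :=
    sum_pos' (fun i hi ↦ mul_nonneg (hN i hi).le (sqrt_nonneg _))
      ⟨j, hj, mul_pos (hN j hj) (sqrt_pos.mpr hθj)⟩
  have hM : 0 < ∑ i ∈ s, N i := sum_pos hN ⟨j, hj⟩
  unfold cpLevel
  positivity

lemma sum_cpAllocation_cpLevel (hs : s.Nonempty) (hN : ∀ i ∈ s, 0 < N i) (hS : 0 ≤ S)
    (hactive : ∀ i ∈ s, cpLevel s θ N S < θ i) :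
    ∑ i ∈ s, N i * cpAllocation (θ i) (cpLevel s θ N S) = S := by
  have hlevel := cpLevel_pos hs hN hS hactive
  set A := ∑ i ∈ s, N i * √(θ i)
  set M := ∑ i ∈ s, N i
  have hM : 0 < M := sum_pos hN hs
  have hA : A ≠ 0 := by
    rintro hA
    simp [cpLevel, A, hA] at hlevel
  have hsqrt : √(cpLevel s θ N S) = A / (S + M) :=
    sqrt_sq (div_nonneg (sum_nonneg fun i hi ↦ mul_nonneg (hN i hi).le (sqrt_nonneg _))
      (by linarith))
  calc ∑ i ∈ s, N i * cpAllocation (θ i) (cpLevel s θ N S)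
      = ∑ i ∈ s, (N i * √(θ i) * ((S + M) / A) - N i) := by
        refine sum_congr rfl fun i hi ↦ ?_
        rw [cpAllocation_eq_of_le hlevel (hactive i hi).le, hsqrt]
        field_simp
    _ = A * ((S + M) / A) - M := by rw [sum_sub_distrib, ← sum_mul]
    _ = S := by field_simp; ring

end Level

lemma filter_range_lt_eq_range {α : Type*} [LinearOrder α] {θ : ℕ → α} {c : α} {k I : ℕ}
    (hkI : k ≤ I) (hactive : ∀ i ∈ range k, c < θ i) (hinactive : ∀ i ∈ Ico k I, θ i ≤ c) :
    (range I).filter (fun i ↦ c < θ i) = range k := by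
  ext i
  simp only [mem_filter, mem_range]
  refine ⟨fun ⟨hiI, hi⟩ ↦ ?_, fun hik ↦ ⟨by omega, hactive i (mem_range.mpr hik)⟩⟩
  by_contra hik
  exact (hinactive i (mem_Ico.mpr ⟨by omega, hiI⟩)).not_gt hi

theorem cp_algorithm_correct_general (I : ℕ) (θ N : ℕ → ℝ)
    (hθanti : ∀ i j, i < j → j < I → θ j < θ i)
    (hN : ∀ i < I, 0 < N i)
    (S : ℝ) (hS : 0 < S)
    (k : ℕ) (hk1 : 1 ≤ k) (hkI : k ≤ I)
    (lamk : ℝ)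
    (hlamk : lamk = ((∑ i ∈ Finset.range k, N i * Real.sqrt (θ i)) /
        (S + ∑ i ∈ Finset.range k, N i)) ^ 2)
    (hth : θ (k - 1) > lamk)
    (hth' : k = I ∨ θ k ≤ lamk) :
    (∑ i ∈ Finset.range I, N i * max (Real.sqrt (θ i / lamk) - 1) 0 = S) ∧
    (∀ lam' : ℝ, 0 < lam' →
      (∑ i ∈ Finset.range I, N i * max (Real.sqrt (θ i / lam') - 1) 0 = S) →
      lam' = lamk) ∧
    ((Finset.range I).filter (fun i => lamk < θ i)).card = k := by
  replace hlamk : lamk = cpLevel (range k) θ N S := hlamk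
  have hθ : AntitoneOn θ (Set.Iio I) :=
    StrictAntiOn.antitoneOn fun i _ j hj hij ↦ hθanti i j hij hj
  have hactive : ∀ i ∈ range k, lamk < θ i := by
    intro i hi
    have hik := mem_range.mp hi
    exact hth.trans_le (hθ (Set.mem_Iio.mpr (by omega)) (Set.mem_Iio.mpr (by omega)) (by omega))
  have hinactive : ∀ i ∈ Ico k I, θ i ≤ lamk := by
    intro i hi
    obtain ⟨hki, hiI⟩ := mem_Ico.mp hi
    obtain h | h := hth'
    · omega
    · exact (hθ (Set.mem_Iio.mpr (by omega)) (Set.mem_Iio.mpr hiI) hki).trans h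
  have hNk : ∀ i ∈ range k, 0 < N i := fun i hi ↦ hN i ((mem_range.mp hi).trans_le hkI)
  have hk : (range k).Nonempty := nonempty_range_iff.mpr (by omega)
  have hlam : 0 < lamk := hlamk ▸ cpLevel_pos hk hNk hS.le (hlamk ▸ hactive)
  have hsolves : ∑ i ∈ range I, N i * cpAllocation (θ i) lamk = S := by
    rw [← sum_range_add_sum_Ico _ hkI, hlamk,
      sum_cpAllocation_cpLevel hk hNk hS.le (hlamk ▸ hactive), ← hlamk, add_eq_left]
    exact sum_eq_zero fun i hi ↦ by rw [cpAllocation_eq_zero_of_le hlam (hinactive i hi), mul_zero]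
  refine ⟨hsolves, fun lam' hlam' hsolves' ↦ ?_, ?_⟩
  · exact eq_of_sum_cpAllocation_eq (fun i hi ↦ (hN i (mem_range.mp hi)).le)
      (mem_range.mpr (by omega : 0 < I)) (hN 0 (by omega)) hlam hlam'
      (hactive 0 (mem_range.mpr hk1)) (hsolves'.trans hsolves.symm)
  · rw [filter_range_lt_eq_range hkI hactive hinactive, card_range]

/-- Correctness of Algorithm 1: if k ∈ {1,…,I} satisfies θ_k > λ(k) and
(k = I or θ_{k+1} ≤ λ(k)), where λ(k) = (∑_{i=1}^k N_i √θ_i / (S + ∑_{i=1}^k N_i))²,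
then λ(k) satisfies the CP water-filling equation, is the unique water level,
and the effective market {i : θ_i > λ(k)} has exactly k groups.
Groups are indexed 0, …, I−1 (so group k of the paper has index k−1). -/
theorem cp_algorithm_correct (I : ℕ) (hI : 1 ≤ I) (θ N : ℕ → ℝ)
    (hθpos : ∀ i < I, 0 < θ i)
    (hθanti : ∀ i j, i < j → j < I → θ j < θ i)
    (hN : ∀ i < I, 0 < N i)
    (S : ℝ) (hS : 0 < S)
    (k : ℕ) (hk1 : 1 ≤ k) (hkI : k ≤ I)
    (lamk : ℝ)
    (hlamk : lamk = ((∑ i ∈ Finset.range k, N i * Real.sqrt (θ i)) /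
        (S + ∑ i ∈ Finset.range k, N i)) ^ 2)
    (hth : θ (k - 1) > lamk)
    (hth' : k = I ∨ θ k ≤ lamk) :
    (∑ i ∈ Finset.range I, N i * max (Real.sqrt (θ i / lamk) - 1) 0 = S) ∧
    (∀ lam' : ℝ, 0 < lam' →
      (∑ i ∈ Finset.range I, N i * max (Real.sqrt (θ i / lam') - 1) 0 = S) →
      lam' = lamk) ∧
    ((Finset.range I).filter (fun i => lamk < θ i)).card = k :=
  cp_algorithm_correct_general I θ N hθanti hN S hS k hk1 hkI lamk hlamk hth hth'
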